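/- In System D, if a heap context H does not bind x and E is a call-by-need covalue, then the command H[⟨x ‖ E⟩] at discipline call-by-need admits no standard reduction step; consequently x is a needed variable of this command. -/

import Mathlib

/-!  System D / System CD: a core, fully dual, multi-discipline sequent
     calculus with user-declared data and codata types (the connectives of
     the core System D — ⊕, ⊗, 0, 1, &, ⅋, ⊤, ⊥, ¬, ∼ and the four families
     of polarity shifts — arise as particular declarations), together with
     native existential and universal type quantifiers. -/

namespace SysD

/-- Evaluation disciplines: call-by-value (+), call-by-name (−),
    call-by-need (lv) and call-by-coneed (ln). -/
inductive Disc : Type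
| pos | neg | lv | ln
deriving DecidableEq

/-- Types: discipline-annotated type variables, declared connectives applied
    to type arguments, and the existential/universal quantifiers. -/
inductive Ty : Type
| tvar : Disc → Nat → Ty
| fcon : Nat → List Ty → Ty
| ex : Disc → Nat → Ty → Ty      -- ∃X:S.A
| all : Disc → Nat → Ty → Ty     -- ∀X:S.A

mutual
  /-- Substitution of a type for a type variable. -/
  def substTy : Ty → Nat → Ty → Ty
  | .tvar S Y, X, B => if Y = X then B else .tvar S Y
  | .fcon F Cs, X, B => .fcon F (substTyList Cs X B)
  | .ex S Y A, X, B => if Y = X then .ex S Y A else .ex S Y (substTy A X B)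
  | .all S Y A, X, B => if Y = X then .all S Y A else .all S Y (substTy A X B)

  def substTyList : List Ty → Nat → Ty → List Ty
  | [], _, _ => []
  | C :: Cs, X, B => substTy C X B :: substTyList Cs X B
end

/-- The signature of a single constructor (for data) or destructor (for
    codata): hidden/private type parameters Ȳ with their kinds, term inputs
    Ā, and coterm inputs B̄.  By convention the declaration's parameters X̄
    are referred to inside the component types as the type variables
    0, …, n−1 and the privates as n, n+1, …. -/
structure ConSig where
  tyArgs : List Disc
  tmArgs : List Ty
  coArgs : List Ty

/-- A (co)data declaration: data F (X̄:k̄) : S with K_i : ∀Ȳᵢ. Āᵢ ⊢ F X̄ | B̄ᵢ,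
    or dually codata G (X̄:k̄) : S with O_i : ∀Ȳᵢ. Āᵢ | G X̄ ⊢ B̄ᵢ. -/
structure Decl where
  isData : Bool
  params : List Disc
  disc : Disc
  sigs : List ConSig

/-- A global environment of declarations. -/
def GEnv : Type := Nat → Option Decl

mutual
  /-- Terms (producers). -/
  inductive Tm : Type
  | var : Nat → Tm
  | mu : Nat → Cmd → Tm                              -- μα.c
  | con : Nat → Nat → List Ty → CoTms → Tms → Tm     -- K_i B̄ ē v̄ of connective F
  | cocase : Branches → Tm                           -- cocase{O X̄ x̄ ᾱ ⇒ c | …}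
  | pack : Ty → Tm → Tm                              -- pack B W : ∃X:S.A
  | lamSpec : Nat → Nat → Cmd → Tm                   -- λ[spec X α].c : ∀X:S.A

  /-- Coterms (consumers). -/
  inductive CoTm : Type
  | covar : Nat → CoTm
  | mut : Nat → Cmd → CoTm                           -- μ̃x.c
  | des : Nat → Nat → List Ty → Tms → CoTms → CoTm   -- O_i B̄ v̄ ē of connective G
  | cases : Branches → CoTm                          -- case{K X̄ ᾱ x̄ ⇒ c | …}
  | spec : Ty → CoTm → CoTm                          -- spec B F : ∀X:S.A
  | casePack : Nat → Nat → Cmd → CoTm                -- μ̃(pack X y).c : ∃X:S.A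

  inductive Tms : Type
  | nil : Tms
  | cons : Tm → Tms → Tms

  inductive CoTms : Type
  | nil : CoTms
  | cons : CoTm → CoTms → CoTms

  /-- A branch binds private type variables, covariables, and variables. -/
  inductive Branch : Type
  | mk : List Nat → List Nat → List Nat → Cmd → Branch

  inductive Branches : Type
  | nil : Branches
  | cons : Branch → Branches → Branches

  /-- Commands, annotated by the discipline of the cut type. -/
  inductive Cmd : Type
  | cut : Tm → Disc → CoTm → Cmd
end

def Branches.get? : Branches → Nat → Option Branch
| .nil, _ => none
| .cons b _, 0 => some b
| .cons _ bs, n+1 => bs.get? n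

/- Substitution of a term for a variable. -/
mutual
  def substVTm : Tm → Nat → Tm → Tm
  | .var y, x, v => if y = x then v else .var y
  | .mu a c, x, v => .mu a (substVCmd c x v)
  | .con F i Bs es vs, x, v => .con F i Bs (substVCoTms es x v) (substVTms vs x v)
  | .cocase brs, x, v => .cocase (substVBrs brs x v)
  | .pack B w, x, v => .pack B (substVTm w x v)
  | .lamSpec X a c, x, v => .lamSpec X a (substVCmd c x v)

  def substVCo : CoTm → Nat → Tm → CoTm
  | .covar b, _, _ => .covar b
  | .mut y c, x, v => if y = x then .mut y c else .mut y (substVCmd c x v)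
  | .des F i Bs vs es, x, v => .des F i Bs (substVTms vs x v) (substVCoTms es x v)
  | .cases brs, x, v => .cases (substVBrs brs x v)
  | .spec B f, x, v => .spec B (substVCo f x v)
  | .casePack X y c, x, v =>
      if y = x then .casePack X y c else .casePack X y (substVCmd c x v)

  def substVTms : Tms → Nat → Tm → Tms
  | .nil, _, _ => .nil
  | .cons t ts, x, v => .cons (substVTm t x v) (substVTms ts x v)

  def substVCoTms : CoTms → Nat → Tm → CoTms
  | .nil, _, _ => .nil
  | .cons e es, x, v => .cons (substVCo e x v) (substVCoTms es x v)

  def substVBr : Branch → Nat → Tm → Branch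
  | .mk tys cvs xs c, x, v =>
      if x ∈ xs then .mk tys cvs xs c else .mk tys cvs xs (substVCmd c x v)

  def substVBrs : Branches → Nat → Tm → Branches
  | .nil, _, _ => .nil
  | .cons b bs, x, v => .cons (substVBr b x v) (substVBrs bs x v)

  def substVCmd : Cmd → Nat → Tm → Cmd
  | .cut t S e, x, v => .cut (substVTm t x v) S (substVCo e x v)
end

/- Substitution of a coterm for a covariable. -/
mutual
  def substETm : Tm → Nat → CoTm → Tm
  | .var y, _, _ => .var y
  | .mu b c, a, e => if b = a then .mu b c else .mu b (substECmd c a e)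
  | .con F i Bs es vs, a, e => .con F i Bs (substECoTms es a e) (substETms vs a e)
  | .cocase brs, a, e => .cocase (substEBrs brs a e)
  | .pack B w, a, e => .pack B (substETm w a e)
  | .lamSpec X b c, a, e =>
      if b = a then .lamSpec X b c else .lamSpec X b (substECmd c a e)

  def substECo : CoTm → Nat → CoTm → CoTm
  | .covar b, a, e => if b = a then e else .covar b
  | .mut y c, a, e => .mut y (substECmd c a e)
  | .des F i Bs vs es, a, e => .des F i Bs (substETms vs a e) (substECoTms es a e)
  | .cases brs, a, e => .cases (substEBrs brs a e)
  | .spec B f, a, e => .spec B (substECo f a e)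
  | .casePack X y c, a, e => .casePack X y (substECmd c a e)

  def substETms : Tms → Nat → CoTm → Tms
  | .nil, _, _ => .nil
  | .cons t ts, a, e => .cons (substETm t a e) (substETms ts a e)

  def substECoTms : CoTms → Nat → CoTm → CoTms
  | .nil, _, _ => .nil
  | .cons e' es, a, e => .cons (substECo e' a e) (substECoTms es a e)

  def substEBr : Branch → Nat → CoTm → Branch
  | .mk tys cvs xs c, a, e =>
      if a ∈ cvs then .mk tys cvs xs c else .mk tys cvs xs (substECmd c a e)

  def substEBrs : Branches → Nat → CoTm → Branches
  | .nil, _, _ => .nil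
  | .cons b bs, a, e => .cons (substEBr b a e) (substEBrs bs a e)

  def substECmd : Cmd → Nat → CoTm → Cmd
  | .cut t S e', a, e => .cut (substETm t a e) S (substECo e' a e)
end

/- Substitution of a type for a type variable in program syntax. -/
mutual
  def substTTm : Tm → Nat → Ty → Tm
  | .var y, _, _ => .var y
  | .mu a c, X, B => .mu a (substTCmd c X B)
  | .con F i Bs es vs, X, B =>
      .con F i (substTyList Bs X B) (substTCoTms es X B) (substTTms vs X B)
  | .cocase brs, X, B => .cocase (substTBrs brs X B)
  | .pack C w, X, B => .pack (substTy C X B) (substTTm w X B)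
  | .lamSpec Y a c, X, B =>
      if Y = X then .lamSpec Y a c else .lamSpec Y a (substTCmd c X B)

  def substTCo : CoTm → Nat → Ty → CoTm
  | .covar b, _, _ => .covar b
  | .mut y c, X, B => .mut y (substTCmd c X B)
  | .des F i Bs vs es, X, B =>
      .des F i (substTyList Bs X B) (substTTms vs X B) (substTCoTms es X B)
  | .cases brs, X, B => .cases (substTBrs brs X B)
  | .spec C f, X, B => .spec (substTy C X B) (substTCo f X B)
  | .casePack Y y c, X, B =>
      if Y = X then .casePack Y y c else .casePack Y y (substTCmd c X B)

  def substTTms : Tms → Nat → Ty → Tms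
  | .nil, _, _ => .nil
  | .cons t ts, X, B => .cons (substTTm t X B) (substTTms ts X B)

  def substTCoTms : CoTms → Nat → Ty → CoTms
  | .nil, _, _ => .nil
  | .cons e es, X, B => .cons (substTCo e X B) (substTCoTms es X B)

  def substTBr : Branch → Nat → Ty → Branch
  | .mk tys cvs xs c, X, B =>
      if X ∈ tys then .mk tys cvs xs c else .mk tys cvs xs (substTCmd c X B)

  def substTBrs : Branches → Nat → Ty → Branches
  | .nil, _, _ => .nil
  | .cons b bs, X, B => .cons (substTBr b X B) (substTBrs bs X B)

  def substTCmd : Cmd → Nat → Ty → Cmd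
  | .cut t S e, X, B => .cut (substTTm t X B) S (substTCo e X B)
end

/-- Iterated substitution of a list of terms for a list of variables. -/
def substVsCmd : Cmd → List Nat → Tms → Cmd
| c, [], _ => c
| c, _, .nil => c
| c, x :: xs, .cons v vs => substVsCmd (substVCmd c x v) xs vs

def substEsCmd : Cmd → List Nat → CoTms → Cmd
| c, [], _ => c
| c, _, .nil => c
| c, a :: as_, .cons e es => substEsCmd (substECmd c a e) as_ es

def substTsCmd : Cmd → List Nat → List Ty → Cmd
| c, [], _ => c
| c, _, [] => c
| c, X :: Xs, B :: Bs => substTsCmd (substTCmd c X B) Xs Bs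

/- Free (co)variables. -/
mutual
  def fvTm : Tm → List Nat
  | .var y => [y]
  | .mu _ c => fvCmd c
  | .con _ _ _ es vs => fvCoTms es ++ fvTms vs
  | .cocase brs => fvBrs brs
  | .pack _ w => fvTm w
  | .lamSpec _ _ c => fvCmd c

  def fvCo : CoTm → List Nat
  | .covar _ => []
  | .mut y c => (fvCmd c).filter (· ≠ y)
  | .des _ _ _ vs es => fvTms vs ++ fvCoTms es
  | .cases brs => fvBrs brs
  | .spec _ f => fvCo f
  | .casePack _ y c => (fvCmd c).filter (· ≠ y)

  def fvTms : Tms → List Nat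
  | .nil => []
  | .cons t ts => fvTm t ++ fvTms ts

  def fvCoTms : CoTms → List Nat
  | .nil => []
  | .cons e es => fvCo e ++ fvCoTms es

  def fvBr : Branch → List Nat
  | .mk _ _ xs c => (fvCmd c).filter (· ∉ xs)

  def fvBrs : Branches → List Nat
  | .nil => []
  | .cons b bs => fvBr b ++ fvBrs bs

  def fvCmd : Cmd → List Nat
  | .cut t _ e => fvTm t ++ fvCo e
end

mutual
  def fcvTm : Tm → List Nat
  | .var _ => []
  | .mu b c => (fcvCmd c).filter (· ≠ b)
  | .con _ _ _ es vs => fcvCoTms es ++ fcvTms vs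
  | .cocase brs => fcvBrs brs
  | .pack _ w => fcvTm w
  | .lamSpec _ b c => (fcvCmd c).filter (· ≠ b)

  def fcvCo : CoTm → List Nat
  | .covar b => [b]
  | .mut _ c => fcvCmd c
  | .des _ _ _ vs es => fcvTms vs ++ fcvCoTms es
  | .cases brs => fcvBrs brs
  | .spec _ f => fcvCo f
  | .casePack _ _ c => fcvCmd c

  def fcvTms : Tms → List Nat
  | .nil => []
  | .cons t ts => fcvTm t ++ fcvTms ts

  def fcvCoTms : CoTms → List Nat
  | .nil => []
  | .cons e es => fcvCo e ++ fcvCoTms es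

  def fcvBr : Branch → List Nat
  | .mk _ cvs _ c => (fcvCmd c).filter (· ∉ cvs)

  def fcvBrs : Branches → List Nat
  | .nil => []
  | .cons b bs => fcvBr b ++ fcvBrs bs

  def fcvCmd : Cmd → List Nat
  | .cut t _ e => fcvTm t ++ fcvCo e
end

/- Weak-head normal terms W and forcing coterms F. -/
mutual
  inductive IsW : Tm → Prop
  | var (x : Nat) : IsW (.var x)
  | con {es : CoTms} {vs : Tms} (F i : Nat) (Bs : List Ty) :
      AllF es → AllW vs → IsW (.con F i Bs es vs)
  | cocase (brs : Branches) : IsW (.cocase brs)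
  | pack {w : Tm} (B : Ty) : IsW w → IsW (.pack B w)
  | lamSpec (X a : Nat) (c : Cmd) : IsW (.lamSpec X a c)

  inductive AllW : Tms → Prop
  | nil : AllW .nil
  | cons {t : Tm} {ts : Tms} : IsW t → AllW ts → AllW (.cons t ts)

  inductive IsF : CoTm → Prop
  | covar (a : Nat) : IsF (.covar a)
  | des {vs : Tms} {es : CoTms} (F i : Nat) (Bs : List Ty) :
      AllW vs → AllF es → IsF (.des F i Bs vs es)
  | cases (brs : Branches) : IsF (.cases brs)
  | spec {f : CoTm} (B : Ty) : IsF f → IsF (.spec B f)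
  | casePack (X y : Nat) (c : Cmd) : IsF (.casePack X y c)

  inductive AllF : CoTms → Prop
  | nil : AllF .nil
  | cons {e : CoTm} {es : CoTms} : IsF e → AllF es → AllF (.cons e es)
end

/-- Heap contexts: stacks of delayed call-by-need variable bindings and
    call-by-coneed covariable bindings:
    H ::= □ | ⟨v ‖ μ̃x.H⟩ (at lv) | ⟨μα.H ‖ e⟩ (at ln). -/
inductive Heap : Type
| hole : Heap
| lvBind : Tm → Nat → Heap → Heap
| lnBind : Nat → Heap → CoTm → Heap

def Heap.fill : Heap → Cmd → Cmd
| .hole, c => c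
| .lvBind v x H, c => .cut v .lv (.mut x (H.fill c))
| .lnBind a H e, c => .cut (.mu a (H.fill c)) .ln e

def Heap.BindsVar : Heap → Nat → Prop
| .hole, _ => False
| .lvBind _ x H, y => x = y ∨ H.BindsVar y
| .lnBind _ H _, y => H.BindsVar y

def Heap.BindsCovar : Heap → Nat → Prop
| .hole, _ => False
| .lvBind _ _ H, b => H.BindsCovar b
| .lnBind a H _, b => a = b ∨ H.BindsCovar b

/-- Discipline-indexed values:  V₊ = W,  V₋ = any term,  V_lv = W,
    V_ln = W or μα.H[⟨V_ln ‖ α⟩] where H does not rebind α. -/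
inductive Val : Disc → Tm → Prop
| pos {v : Tm} : IsW v → Val .pos v
| neg (v : Tm) : Val .neg v
| lv {v : Tm} : IsW v → Val .lv v
| lnW {v : Tm} : IsW v → Val .ln v
| lnMu {v : Tm} {H : Heap} (a : Nat) :
    Val .ln v → ¬ H.BindsCovar a →
    Val .ln (.mu a (H.fill (.cut v .ln (.covar a))))

/-- Discipline-indexed covalues:  E₊ = any coterm,  E₋ = F,  E_ln = F,
    E_lv = F or μ̃x.H[⟨x ‖ E_lv⟩] where H does not rebind x. -/
inductive Coval : Disc → CoTm → Prop
| pos (e : CoTm) : Coval .pos e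
| neg {e : CoTm} : IsF e → Coval .neg e
| ln {e : CoTm} : IsF e → Coval .ln e
| lvF {e : CoTm} : IsF e → Coval .lv e
| lvMut {e : CoTm} {H : Heap} (x : Nat) :
    Coval .lv e → ¬ H.BindsVar x →
    Coval .lv (.mut x (H.fill (.cut (.var x) .lv e)))

/-- The standard (operational) reduction of System D/CD. -/
inductive Step : Cmd → Cmd → Prop
| betaMu {S : Disc} {e : CoTm} (a : Nat) (c : Cmd) :
    S ≠ .ln → Coval S e →
    Step (.cut (.mu a c) S e) (substECmd c a e)
| betaMut {S : Disc} {v : Tm} (x : Nat) (c : Cmd) :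
    S ≠ .lv → Val S v →
    Step (.cut v S (.mut x c)) (substVCmd c x v)
| betaMuConeed {e : CoTm} (a : Nat) (c : Cmd) :
    Val .ln (.mu a c) → (∀ b, e ≠ .covar b) → Coval .ln e →
    Step (.cut (.mu a c) .ln e) (substECmd c a e)
| betaMutNeed {v : Tm} (x : Nat) (c : Cmd) :
    Coval .lv (.mut x c) → (∀ y, v ≠ .var y) → Val .lv v →
    Step (.cut v .lv (.mut x c)) (substVCmd c x v)
| betaP {es : CoTms} {vs : Tms} {brs : Branches}
    (F i : Nat) (Bs : List Ty) (S : Disc) (tys cvs xs : List Nat) (c : Cmd) :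
    brs.get? i = some (.mk tys cvs xs c) →
    AllF es → AllW vs →
    Step (.cut (.con F i Bs es vs) S (.cases brs))
         (substVsCmd (substEsCmd (substTsCmd c tys Bs) cvs es) xs vs)
| betaQ {vs : Tms} {es : CoTms} {brs : Branches}
    (F i : Nat) (Bs : List Ty) (S : Disc) (tys xs cvs : List Nat) (c : Cmd) :
    brs.get? i = some (.mk tys cvs xs c) →
    AllW vs → AllF es →
    Step (.cut (.cocase brs) S (.des F i Bs vs es))
         (substEsCmd (substVsCmd (substTsCmd c tys Bs) xs vs) cvs es)
| betaPack {w : Tm} (B : Ty) (X y : Nat) (c : Cmd) :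
    IsW w →
    Step (.cut (.pack B w) .pos (.casePack X y c))
         (substVCmd (substTCmd c X B) y w)
| betaSpec {f : CoTm} (B : Ty) (X a : Nat) (c : Cmd) :
    IsF f →
    Step (.cut (.lamSpec X a c) .neg (.spec B f))
         (substECmd (substTCmd c X B) a f)
| heap {c c' : Cmd} (H : Heap) :
    Step c c' → Step (H.fill c) (H.fill c')

/-- A command that admits no standard reduction step. -/
def Irred (c : Cmd) : Prop := ¬ ∃ c', Step c c'

/-- `x` is a needed variable of `c`. -/
def NeededVar (c : Cmd) (x : Nat) : Prop :=
  Irred c ∧ ∃ (H : Heap) (S : Disc) (E : CoTm),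
    Coval S E ∧ ¬ H.BindsVar x ∧ c = H.fill (.cut (.var x) S E)

/-- `a` is a needed covariable of `c`. -/
def NeededCovar (c : Cmd) (a : Nat) : Prop :=
  Irred c ∧ ∃ (H : Heap) (S : Disc) (V : Tm),
    Val S V ∧ ¬ H.BindsCovar a ∧ c = H.fill (.cut V S (.covar a))

/-- A command is finished when it needs some (co)variable. -/
def Finished (c : Cmd) : Prop :=
  Irred c ∧ ∃ z, NeededVar c z ∨ NeededCovar c z

/-- A command is stuck when it cannot step and needs no (co)variable. -/
def Stuck (c : Cmd) : Prop :=
  Irred c ∧ ¬ ∃ z, NeededVar c z ∨ NeededCovar c z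

end SysD

/-!
Reading `H[⟨x ‖ E⟩]` along its syntax, every `lv`-binding `⟨v ‖ μ̃z.c⟩` either binds a variable
other than the demanded one, or has `v = x` and a covalue `μ̃z.c` whose body demands `z`. By
induction along this reading the demanded variable is unique, and no command demands both a
variable at `lv` and a covariable at `ln`. That rules out every redex: `μ̃z.c` fires at `lv` only
as a covalue, so `c` would demand `z` besides the other variable; `μα.c` fires at `ln` only as a
value, so `c` would demand `α`; and a step under a heap context is a step of a subcommand that
again demands a variable.
-/

namespace SysD

/-- `Demands c x`: `c` is of the form `H[⟨x ‖ E⟩]` at `lv` with `E` a call-by-need covalue and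
`H` not binding `x`, described along the syntax of `c` (`chain` unfolds the covalues `μ̃z.H[⟨z ‖ E⟩]`). -/
inductive Demands : Cmd → Nat → Prop
| force {e : CoTm} (x : Nat) : IsF e → Demands (.cut (.var x) .lv e) x
| chain {c : Cmd} (x z : Nat) : Demands c z → Demands (.cut (.var x) .lv (.mut z c)) x
| lvBind {c : Cmd} {x : Nat} (v : Tm) (z : Nat) :
    Demands c x → z ≠ x → Demands (.cut v .lv (.mut z c)) x
| lnBind {c : Cmd} {x : Nat} (a : Nat) (e : CoTm) :
    Demands c x → Demands (.cut (.mu a c) .ln e) x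

namespace Demands

theorem heap_fill {c : Cmd} {x : Nat} (hc : Demands c x) :
    ∀ {H : Heap}, ¬ H.BindsVar x → Demands (H.fill c) x
  | .hole, _ => hc
  | .lvBind v z _, hb =>
    lvBind v z (heap_fill hc fun h => hb (Or.inr h)) fun h => hb (Or.inl h)
  | .lnBind a _ e, hb => lnBind a e (heap_fill hc hb)

theorem of_coval {S : Disc} {E : CoTm} (hE : Coval S E) (hS : S = .lv) (x : Nat) :
    Demands (.cut (.var x) .lv E) x := by
  induction hE generalizing x with
  | lvF hF => exact force x hF
  | lvMut z _ hb ih => exact chain x z ((ih rfl z).heap_fill hb)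
  | _ => cases hS

theorem of_heap_fill {H : Heap} {x : Nat} {E : CoTm} (hb : ¬ H.BindsVar x) (hE : Coval .lv E) :
    Demands (H.fill (.cut (.var x) .lv E)) x :=
  (of_coval hE rfl x).heap_fill hb

theorem of_coval_mut {z : Nat} {c : Cmd} (h : Coval .lv (.mut z c)) : Demands c z := by
  cases h with
  | lvF hF => cases hF
  | lvMut _ hE hb => exact of_heap_fill hb hE

theorem unique {c : Cmd} {x y : Nat} (hx : Demands c x) (hy : Demands c y) : x = y := by
  induction hx generalizing y with
  | force _ hF =>
    cases hy with
    | force => rfl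
    | chain => cases hF
    | lvBind _ _ _ _ => cases hF
  | chain _ _ _ ih =>
    cases hy with
    | force _ hF => cases hF
    | chain => rfl
    | lvBind _ _ hc hne => exact absurd (ih hc) hne
  | lvBind _ _ _ hne ih =>
    cases hy with
    | force _ hF => cases hF
    | chain _ _ hc => exact absurd (ih hc).symm hne
    | lvBind _ _ hc _ => exact ih hc
  | lnBind _ _ _ ih =>
    cases hy with
    | lnBind _ _ hc => exact ih hc

theorem ne_heap_fill_covar {c : Cmd} {x : Nat} (hc : Demands c x) :
    ∀ {H : Heap} {V : Tm} {a : Nat}, Val .ln V → c ≠ H.fill (.cut V .ln (.covar a)) := by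
  induction hc with
  | force _ hF =>
    rintro (_ | ⟨_, _, _⟩ | ⟨_, _, _⟩) V a _ h <;> cases h
    cases hF
  | chain _ _ _ ih | lvBind _ _ _ _ ih =>
    rintro (_ | ⟨_, _, H⟩ | ⟨_, _, _⟩) V a hV h <;> cases h
    exact ih hV rfl
  | lnBind _ _ _ ih =>
    rintro (_ | ⟨_, _, _⟩ | ⟨_, H, _⟩) V a hV h <;> cases h
    · cases hV with
      | lnW hW => cases hW
      | lnMu _ hV' _ => exact ih hV' rfl
    · exact ih hV rfl

theorem not_of_val_mu {a x : Nat} {c : Cmd} (hv : Val .ln (.mu a c)) : ¬ Demands c x := by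
  intro hc
  cases hv with
  | lnW hW => cases hW
  | lnMu _ hV _ => exact hc.ne_heap_fill_covar hV rfl

theorem exists_of_heap_fill {d : Cmd} :
    ∀ {H : Heap} {x : Nat}, Demands (H.fill d) x → ∃ y, Demands d y
  | .hole, x, h => ⟨x, h⟩
  | .lvBind _ _ _, _, h => by
    cases h with
    | force _ hF => cases hF
    | chain _ _ hc | lvBind _ _ hc _ => exact exists_of_heap_fill hc
  | .lnBind _ _ _, _, h => by
    cases h with
    | lnBind _ _ hc => exact exists_of_heap_fill hc

theorem irred {c : Cmd} {x : Nat} (hc : Demands c x) : Irred c := by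
  rintro ⟨c', hstep⟩
  induction hstep generalizing x with
  | betaMu _ _ hS hE =>
    cases hc with
    | lvBind _ _ hc hne => exact hne (of_coval_mut hE |>.unique hc)
    | lnBind => exact hS rfl
  | betaMut _ _ hS hV =>
    cases hc with
    | force | chain | lvBind => exact hS rfl
    | lnBind _ _ hc => exact not_of_val_mu hV hc
  | betaMuConeed _ _ hV =>
    cases hc with
    | lnBind _ _ hc => exact not_of_val_mu hV hc
  | betaMutNeed _ _ hE hne =>
    cases hc with
    | force | chain => exact hne x rfl
    | lvBind _ _ hc hne' => exact hne' (of_coval_mut hE |>.unique hc)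
  | heap _ _ ih =>
    obtain ⟨y, hd⟩ := exists_of_heap_fill hc
    exact ih hd
  | _ => cases hc

end Demands

/-- if the heap context H does not bind x and E is a
    call-by-need covalue, then the call-by-need command H[⟨x ‖ E⟩] admits no
    standard reduction step, and consequently x is a needed variable of it. -/
theorem demanded_variable_is_needed :
    ∀ (H : Heap) (x : Nat) (E : CoTm),
      ¬ H.BindsVar x → Coval .lv E →
      (¬ ∃ c', Step (H.fill (.cut (.var x) .lv E)) c') ∧
      NeededVar (H.fill (.cut (.var x) .lv E)) x := by
  intro H x E hb hE
  have hirr := (Demands.of_heap_fill hb hE).irred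
  exact ⟨hirr, hirr, H, .lv, E, hE, hb, rfl⟩

end SysD
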